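/- arXiv:1208.0754 — 3 statements merged into one kernel-verified Lean document; each statement's English description precedes it below -/
import Mathlib

section
/- Let p be a real number and z > 0 a real number with p + ln z > 0. Set σ = 1/(p + ln z), τ = (p + ln(p + ln z))/(p + ln z), and u = W(z) − ln z + ln(p + ln z). Then 1 − exp(−u) + σ·u − τ = 0. (In particular, the fundamental relation 1 − e^{−u} + σu − τ = 0 is invariant under the one-parameter family of transformations indexed by p.) -/
open Real

theorem exp_log_sub_eq_of_mul_exp_eq {w z : ℝ} (hz : 0 < z) (hw : w * exp w = z) :
    exp (log z - w) = w := by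
  rw [exp_sub, exp_log hz, ← hw, mul_div_cancel_right₀ _ (exp_pos w).ne']

theorem exp_neg_sub_log_add_log_of_mul_exp_eq {w z a : ℝ} (hz : 0 < z) (ha : 0 < a)
    (hw : w * exp w = z) : exp (-(w - log z + log a)) = w / a := by
  rw [show -(w - log z + log a) = (log z - w) - log a by ring, exp_sub,
    exp_log_sub_eq_of_mul_exp_eq hz hw, exp_log ha]

theorem stmt_0_general (p z w : ℝ) (hz : 0 < z) (hpz : 0 < p + Real.log z)
    (hw2 : w * Real.exp w = z) :
    1 - Real.exp (-(w - Real.log z + Real.log (p + Real.log z)))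
      + (1 / (p + Real.log z)) * (w - Real.log z + Real.log (p + Real.log z))
      - (p + Real.log (p + Real.log z)) / (p + Real.log z) = 0 := by
  rw [exp_neg_sub_log_add_log_of_mul_exp_eq hz hpz hw2]
  field_simp
  ring

/-- invariance of the fundamental relation `1 - e^{-u} + σu - τ = 0`
under the one-parameter family of transformations indexed by `p`.
Here `w = W(z)` is characterized as the unique real `w ≥ -1` with `w·exp w = z`. -/
theorem stmt_0 (p z w : ℝ) (hz : 0 < z) (hpz : 0 < p + Real.log z)
    (hw1 : -1 ≤ w) (hw2 : w * Real.exp w = z) :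
    1 - Real.exp (-(w - Real.log z + Real.log (p + Real.log z)))
      + (1 / (p + Real.log z)) * (w - Real.log z + Real.log (p + Real.log z))
      - (p + Real.log (p + Real.log z)) / (p + Real.log z) = 0 :=
  stmt_0_general p z w hz hpz hw2
end

section
/- (Carlitz–Riordan identity.) For every integer n ≥ 1 and every real number λ: ∑_{k=0}^{n−1} E₂(n,k)·(1+λ)^{n−1−k}·λ^k = ∑_{k=1}^{n} S(n+k, k)·λ^{k−1}. -/
/-- Second-order Eulerian numbers: `E₂(0,0)=1`, `E₂(n,k)=0` if `n≥1` and `k≥n`, and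
`E₂(n,k)=(k+1)·E₂(n−1,k)+(2n−1−k)·E₂(n−1,k−1)` for `n≥1`. -/
def E2 : ℕ → ℕ → ℕ
  | 0, 0 => 1
  | 0, _ + 1 => 0
  | n + 1, 0 => E2 n 0
  | n + 1, k + 1 => (k + 2) * E2 n (k + 1) + (2 * n - k) * E2 n k

/-- 2-associated Stirling subset numbers: `S(0,0)=1`, `S(n,k)=0` if `n<2k` and
`(n,k)≠(0,0)`, and `S(n,k)=k·S(n−1,k)+(n−1)·S(n−2,k−1)` for `n≥1`. -/
def S2 : ℕ → ℕ → ℕ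
  | 0, 0 => 1
  | 0, _ + 1 => 0
  | 1, _ => 0
  | _ + 2, 0 => 0
  | n + 2, k + 1 => (k + 1) * S2 (n + 1) (k + 1) + (n + 1) * S2 n k

/-!
Expanding `(1 + λ) ^ (n - 1 - k)` binomially, the coefficient of `λ ^ m` on the left is
`∑_{j ≤ m} E₂(n,j) · C(n-1-j, m-j)`, so the identity amounts to
`S(n+k, k) = ∑_{j<k} E₂(n,j) · C(n-1-j, k-1-j)`. This is proved by induction on `n`: the right
side satisfies the recurrence of `S`, which after splitting off the recurrence of `E₂` reduces
termwise to Pascal's rule and the absorption identity `(b+1) C(a+1,b+1) = (a+1) C(a,b)`.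
-/

open Finset

theorem S2_eq_zero_of_lt : ∀ {m k : ℕ}, m < 2 * k → S2 m k = 0
  | 0, 0, h => absurd h (lt_irrefl 0)
  | 0, _ + 1, _ => rfl
  | 1, _, _ => rfl
  | _ + 2, 0, _ => rfl
  | m + 2, k + 1, h => by
      rw [S2, S2_eq_zero_of_lt (m := m + 1) (by omega), S2_eq_zero_of_lt (m := m) (by omega),
        mul_zero, mul_zero, add_zero]

theorem E2_eq_zero_of_le : ∀ {n k : ℕ}, n ≤ k + 1 → E2 n (k + 1) = 0
  | 0, _, _ => rfl
  | n + 1, 0, h => by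
      obtain rfl : n = 0 := by omega
      rfl
  | n + 1, k + 1, h => by
      rw [E2, E2_eq_zero_of_le (n := n) (by omega), E2_eq_zero_of_le (n := n) (by omega),
        mul_zero, mul_zero, add_zero]

theorem sum_mul_one_add_pow_mul_pow {R : Type*} [CommSemiring R] (c : ℕ → R) (n : ℕ) (x : R) :
    ∑ k ∈ range n, c k * (1 + x) ^ (n - 1 - k) * x ^ k =
      ∑ m ∈ range n, (∑ j ∈ range (m + 1), c j * (n - 1 - j).choose (m - j)) * x ^ m :=
  calc ∑ k ∈ range n, c k * (1 + x) ^ (n - 1 - k) * x ^ k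
      = ∑ k ∈ range n, ∑ i ∈ range (n - k), c k * (n - 1 - k).choose i * x ^ (k + i) := by
        refine sum_congr rfl fun k hk => ?_
        rw [add_comm 1 x, add_pow, show n - 1 - k + 1 = n - k by grind, mul_sum, sum_mul]
        refine sum_congr rfl fun i _ => ?_
        ring
    _ = ∑ m ∈ range n, ∑ j ∈ range (m + 1),
          c j * (n - 1 - j).choose (m - j) * x ^ (j + (m - j)) :=
        (sum_range_diag_flip n fun j i => c j * (n - 1 - j).choose i * x ^ (j + i)).symm
    _ = _ := by
        simp_rw [sum_mul]
        refine sum_congr rfl fun m _ => sum_congr rfl fun j hj => ?_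
        rw [Nat.add_sub_cancel' (by grind)]

theorem E2_mul_choose_recurrence_term {n j k : ℕ} (hn : 1 ≤ n) (hj : j < k) :
    (j + 1) * (E2 n j * (n - j).choose (k - j))
        + (2 * n - j) * (E2 n j * (n - 1 - j).choose (k - 1 - j))
      = (k + 1) * (E2 n j * (n - 1 - j).choose (k - j))
        + (n + k + 1) * (E2 n j * (n - 1 - j).choose (k - 1 - j)) := by
  rcases lt_or_ge j n with hjn | hnj
  · obtain ⟨a, rfl⟩ : ∃ a, n = a + j + 1 := ⟨n - j - 1, by omega⟩
    obtain ⟨b, rfl⟩ : ∃ b, k = b + j + 1 := ⟨k - j - 1, by omega⟩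
    rw [show a + j + 1 - j = a + 1 by omega, show a + j + 1 - 1 - j = a by omega,
      show b + j + 1 - j = b + 1 by omega, show b + j + 1 - 1 - j = b by omega,
      show 2 * (a + j + 1) - j = 2 * a + j + 2 by omega, Nat.choose_succ_succ]
    have absorption := Nat.add_one_mul_choose_eq a b
    rw [Nat.choose_succ_succ] at absorption
    grind
  · obtain ⟨i, rfl⟩ : ∃ i, j = i + 1 := ⟨j - 1, by omega⟩
    simp only [E2_eq_zero_of_le hnj, zero_mul, mul_zero]

theorem sum_E2_mul_choose_succ {n : ℕ} (hn : 1 ≤ n) (k : ℕ) :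
    ∑ j ∈ range (k + 1), E2 (n + 1) j * (n - j).choose (k - j) =
      (k + 1) * ∑ j ∈ range (k + 1), E2 n j * (n - 1 - j).choose (k - j)
        + (n + k + 1) * ∑ j ∈ range k, E2 n j * (n - 1 - j).choose (k - 1 - j) := by
  have expand : ∑ j ∈ range (k + 1), E2 (n + 1) j * (n - j).choose (k - j)
      = ∑ j ∈ range (k + 1), (j + 1) * (E2 n j * (n - j).choose (k - j))
        + ∑ j ∈ range k, (2 * n - j) * (E2 n j * (n - 1 - j).choose (k - 1 - j)) := by
    rw [sum_range_succ', sum_range_succ' (fun j => (j + 1) * (E2 n j * _)), add_right_comm,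
      ← sum_add_distrib]
    congr 1
    · refine sum_congr rfl fun i _ => ?_
      rw [E2, show n - (i + 1) = n - 1 - i by omega, show k - (i + 1) = k - 1 - i by omega]
      ring
    · rw [E2]
      ring
  have termwise := sum_congr rfl fun j hj =>
    E2_mul_choose_recurrence_term (k := k) hn (mem_range.mp hj)
  simp only [sum_add_distrib] at termwise
  rw [expand, sum_range_succ, sum_range_succ, mul_add, mul_sum, mul_sum]
  simp only [Nat.sub_self, Nat.choose_zero_right]
  linarith [termwise]

theorem S2_add_eq_sum_E2_mul_choose {n : ℕ} (hn : 1 ≤ n) (k : ℕ) :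
    S2 (n + k) k = ∑ j ∈ range k, E2 n j * (n - 1 - j).choose (k - 1 - j) := by
  induction n, hn using Nat.le_induction generalizing k with
  | base =>
    match k with
    | 0 => rfl
    | 1 => rfl
    | m + 2 =>
      rw [S2_eq_zero_of_lt (by omega), eq_comm, sum_range_succ',
        sum_eq_zero fun i _ => by rw [E2_eq_zero_of_le (by omega), zero_mul]]
      simp
  | succ n hn ih =>
    match k with
    | 0 =>
      obtain ⟨m, rfl⟩ : ∃ m, n = m + 1 := ⟨n - 1, by omega⟩
      rfl
    | k + 1 =>
      rw [show n + 1 + (k + 1) = n + k + 2 by omega, S2, show n + k + 1 = n + (k + 1) by omega,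
        ih, ih]
      simp only [Nat.add_sub_cancel]
      exact (sum_E2_mul_choose_succ hn k).symm

/-- Carlitz–Riordan identity: for `n ≥ 1` and real `λ`,
`∑_{k=0}^{n−1} E₂(n,k)·(1+λ)^{n−1−k}·λ^k = ∑_{k=1}^{n} S(n+k, k)·λ^{k−1}`. -/
theorem stmt_14 (n : ℕ) (hn : 1 ≤ n) (lam : ℝ) :
    ∑ k ∈ Finset.range n, (E2 n k : ℝ) * (1 + lam) ^ (n - 1 - k) * lam ^ k
      = ∑ k ∈ Finset.Icc 1 n, (S2 (n + k) k : ℝ) * lam ^ (k - 1) := by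
  rw [sum_mul_one_add_pow_mul_pow (fun k => (E2 n k : ℝ)), ← Ico_add_one_right_eq_Icc,
    sum_Ico_eq_sum_range, add_tsub_cancel_right]
  refine sum_congr rfl fun m _ => ?_
  rw [add_comm 1 m, add_tsub_cancel_right, S2_add_eq_sum_E2_mul_choose hn, add_tsub_cancel_right]
  push_cast
  rfl
end

section
/- For all integers n ≥ 1 and 1 ≤ q ≤ n: S(n+q, q) = ∑_{p=0}^{q−1} C(n−p−1, q−p−1)·E₂(n,p), and for all integers n ≥ 1 and 0 ≤ q ≤ n−1: E₂(n,q) = ∑_{p=0}^{q} (−1)^{q−p}·C(n−p−1, q−p)·S(n+p+1, p+1), where C(a,b) denotes the binomial coefficient (equal to 0 when b > a or b < 0). -/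
open Finset

theorem E2_eq_zero_of_le_s15 {n k : ℕ} (hn : 1 ≤ n) (hk : n ≤ k) : E2 n k = 0 := by
  induction n generalizing k with
  | zero => omega
  | succ n ih =>
    obtain ⟨k, rfl⟩ : ∃ j, k = j + 1 := ⟨k - 1, by omega⟩
    rcases n.eq_zero_or_pos with rfl | hn
    · simp [E2]
    · simp [E2, ih hn (k := k + 1) (by omega), ih hn (k := k) (by omega)]

theorem S2_eq_zero_of_lt_two_mul : ∀ {n k : ℕ}, n < 2 * k → S2 n k = 0
  | 0, _ + 1, _ | 1, _, _ => rfl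
  | n + 2, k + 1, h => by
    rcases k.eq_zero_or_pos with rfl | hk
    · omega
    · simp [S2, S2_eq_zero_of_lt_two_mul (n := n + 1) (k := k + 1) (by omega),
        S2_eq_zero_of_lt_two_mul (n := n) (k := k) (by omega)]

theorem sum_neg_one_pow_sub_mul_choose (t : ℕ) :
    ∑ i ∈ range (t + 1), (-1 : ℤ) ^ (t - i) * t.choose i = if t = 0 then 1 else 0 := by
  have := add_pow (1 : ℤ) (-1) t
  simp only [add_neg_cancel, one_pow, one_mul] at this
  rw [← this, zero_pow_eq]

theorem sum_neg_one_pow_mul_choose_mul_choose (m t : ℕ) :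
    ∑ i ∈ range (t + 1), (-1 : ℤ) ^ (t - i) * (m - i).choose (t - i) * m.choose i =
      if t = 0 then 1 else 0 := by
  have hterm : ∀ i ∈ range (t + 1), (-1 : ℤ) ^ (t - i) * (m - i).choose (t - i) * m.choose i =
      m.choose t * ((-1) ^ (t - i) * t.choose i) := by
    intro i hi
    have := Nat.choose_mul (n := m) (Nat.lt_succ_iff.mp (mem_range.mp hi))
    rw [← mul_left_comm, ← Nat.cast_mul, this]
    push_cast
    ring
  rw [sum_congr rfl hterm, ← mul_sum, sum_neg_one_pow_sub_mul_choose]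
  split_ifs with ht <;> simp [ht]

theorem sum_choose_inversion (m : ℕ) (f g : ℕ → ℤ)
    (hg : ∀ q, g q = ∑ p ∈ range (q + 1), ((m - p).choose (q - p) : ℤ) * f p) (q : ℕ) :
    f q = ∑ p ∈ range (q + 1), (-1) ^ (q - p) * ((m - p).choose (q - p) : ℤ) * g p := by
  have hinner : ∀ j ∈ Ico 0 (q + 1), ∑ p ∈ Ico j (q + 1),
      (-1) ^ (q - p) * ((m - p).choose (q - p) : ℤ) * (((m - j).choose (p - j) : ℤ) * f j) =
        if j = q then f j else 0 := by
    intro j hj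
    have hjq : j ≤ q := Nat.lt_succ_iff.mp (mem_Ico.mp hj).2
    rw [sum_Ico_eq_sum_range, show q + 1 - j = q - j + 1 by omega]
    have hterm : ∀ i ∈ range (q - j + 1),
        (-1) ^ (q - (j + i)) * ((m - (j + i)).choose (q - (j + i)) : ℤ) *
          (((m - j).choose (j + i - j) : ℤ) * f j) =
        (-1) ^ (q - j - i) * ((m - j - i).choose (q - j - i) : ℤ) * (m - j).choose i * f j := by
      intro i _
      rw [Nat.sub_add_eq, Nat.sub_add_eq, Nat.add_sub_cancel_left]
      ring
    rw [sum_congr rfl hterm, ← sum_mul, sum_neg_one_pow_mul_choose_mul_choose]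
    by_cases h : j = q <;> simp [h, show q - j ≠ 0 ↔ j ≠ q by omega]
  symm
  calc ∑ p ∈ range (q + 1), (-1) ^ (q - p) * ((m - p).choose (q - p) : ℤ) * g p
      = ∑ p ∈ Ico 0 (q + 1), ∑ j ∈ Ico 0 (p + 1),
          (-1) ^ (q - p) * ((m - p).choose (q - p) : ℤ) *
            (((m - j).choose (p - j) : ℤ) * f j) := by
        simp_rw [hg, mul_sum, range_eq_Ico]
    _ = ∑ j ∈ Ico 0 (q + 1), ∑ p ∈ Ico j (q + 1),
          (-1) ^ (q - p) * ((m - p).choose (q - p) : ℤ) *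
            (((m - j).choose (p - j) : ℤ) * f j) :=
        (sum_Ico_Ico_comm 0 (q + 1) _).symm
    _ = f q := by
        rw [sum_congr rfl hinner, sum_ite_eq']
        simp

theorem choose_mul_E2_coeff {n k p : ℕ} (hpk : p < k) (hpn : p < n) :
    (p + 1) * ((n - p).choose (k - p) : ℤ) +
        ((2 * n - p : ℕ) : ℤ) * (n - p - 1).choose (k - p - 1) =
      (k + 1) * (n - p - 1).choose (k - p) + (n + k + 1) * (n - p - 1).choose (k - p - 1) := by
  obtain ⟨a, rfl⟩ : ∃ a, n = a + p + 1 := ⟨n - p - 1, by omega⟩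
  obtain ⟨b, rfl⟩ : ∃ b, k = b + p + 1 := ⟨k - p - 1, by omega⟩
  rw [show a + p + 1 - p = a + 1 by omega, show b + p + 1 - p = b + 1 by omega,
    show a + 1 - 1 = a by omega, show b + 1 - 1 = b by omega,
    show 2 * (a + p + 1) - p = 2 * a + p + 2 by omega]
  have hpascal : ((a + 1).choose (b + 1) : ℤ) = a.choose b + a.choose (b + 1) := by
    exact_mod_cast Nat.choose_succ_succ a b
  have habsorb : ((a + 1) * a.choose b : ℤ) = (a + 1).choose (b + 1) * (b + 1) := by
    exact_mod_cast Nat.add_one_mul_choose_eq a b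
  push_cast
  linear_combination (b + p + 2) * hpascal + habsorb

theorem sum_choose_mul_E2_succ {n : ℕ} (hn : 1 ≤ n) (k : ℕ) :
    ∑ p ∈ range (k + 1), ((n - p).choose (k - p) : ℤ) * E2 (n + 1) p =
      (k + 1) * ∑ p ∈ range (k + 1), ((n - p - 1).choose (k - p) : ℤ) * E2 n p +
        (n + k + 1) * ∑ p ∈ range k, ((n - p - 1).choose (k - p - 1) : ℤ) * E2 n p := by
  have hterm : ∀ p ∈ range k,
      (p + 1) * ((n - p).choose (k - p) : ℤ) * E2 n p +
          ((2 * n - p : ℕ) : ℤ) * (n - p - 1).choose (k - p - 1) * E2 n p =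
        (k + 1) * ((n - p - 1).choose (k - p) * E2 n p) +
          (n + k + 1) * ((n - p - 1).choose (k - p - 1) * E2 n p) := by
    intro p hp
    rcases lt_or_ge p n with hpn | hpn
    · linear_combination (E2 n p : ℤ) * choose_mul_E2_coeff (mem_range.mp hp) hpn
    · simp [E2_eq_zero_of_le_s15 hn hpn]
  calc ∑ p ∈ range (k + 1), ((n - p).choose (k - p) : ℤ) * E2 (n + 1) p
      = ∑ p ∈ range (k + 1), (p + 1) * ((n - p).choose (k - p) : ℤ) * E2 n p +
          ∑ p ∈ range k,
            ((2 * n - p : ℕ) : ℤ) * (n - p - 1).choose (k - p - 1) * E2 n p := by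
        rw [sum_range_succ', sum_range_succ' (fun p => (p + 1 : ℤ) * _ * _)]
        simp only [E2, Nat.sub_sub]
        push_cast
        rw [add_right_comm, ← sum_add_distrib]
        congr 1
        · exact sum_congr rfl fun x _ => by ring
        · ring
    _ = _ := by
        have hsum := sum_congr rfl hterm
        rw [sum_add_distrib, sum_add_distrib, ← mul_sum, ← mul_sum] at hsum
        rw [sum_range_succ, sum_range_succ]
        simp only [Nat.sub_self, Nat.choose_zero_right, Nat.cast_one]
        linear_combination hsum

theorem S2_add_eq_sum_choose_mul_E2 {n : ℕ} (hn : 1 ≤ n) (q : ℕ) :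
    (S2 (n + q) q : ℤ) = ∑ p ∈ range q, ((n - p - 1).choose (q - p - 1) : ℤ) * E2 n p := by
  induction n, hn using Nat.le_induction generalizing q with
  | base =>
    rcases q with _ | _ | q
    · rfl
    · simp [S2, E2]
    · rw [S2_eq_zero_of_lt_two_mul (by omega), sum_range_succ']
      simp [E2]
  | succ n hn ih =>
    rcases q with _ | k
    · simp [S2, show n + 1 = n - 1 + 2 by omega]
    · rw [show n + 1 + (k + 1) = n + k + 2 by ring, S2]
      push_cast
      rw [ih, show n + k + 1 = n + (k + 1) by ring, ih]
      simp only [show ∀ a p : ℕ, a + 1 - p - 1 = a - p by omega]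
      exact (sum_choose_mul_E2_succ hn k).symm

/-- for `n ≥ 1`, `1 ≤ q ≤ n`:
`S(n+q, q) = ∑_{p=0}^{q−1} C(n−p−1, q−p−1)·E₂(n,p)`, and for `n ≥ 1`, `0 ≤ q ≤ n−1`:
`E₂(n,q) = ∑_{p=0}^{q} (−1)^{q−p}·C(n−p−1, q−p)·S(n+p+1, p+1)`. -/
theorem stmt_15 :
    (∀ n q : ℕ, 1 ≤ n → 1 ≤ q → q ≤ n →
      (S2 (n + q) q : ℤ) =
        ∑ p ∈ Finset.range q, (Nat.choose (n - p - 1) (q - p - 1) : ℤ) * (E2 n p : ℤ)) ∧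
    (∀ n q : ℕ, 1 ≤ n → q ≤ n - 1 →
      (E2 n q : ℤ) =
        ∑ p ∈ Finset.range (q + 1),
          (-1 : ℤ) ^ (q - p) * (Nat.choose (n - p - 1) (q - p) : ℤ) *
            (S2 (n + p + 1) (p + 1) : ℤ)) := by
  refine ⟨fun n q hn _ _ => S2_add_eq_sum_choose_mul_E2 hn q, fun n q hn _ => ?_⟩
  have hS : ∀ q, (S2 (n + q + 1) (q + 1) : ℤ) =
      ∑ p ∈ range (q + 1), ((n - 1 - p).choose (q - p) : ℤ) * E2 n p := by
    intro q
    rw [show n + q + 1 = n + (q + 1) by ring, S2_add_eq_sum_choose_mul_E2 hn (q + 1)]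
    simp only [show ∀ a p : ℕ, a + 1 - p - 1 = a - p by omega, Nat.sub_right_comm n]
  simpa only [Nat.sub_right_comm n] using
    sum_choose_inversion (n - 1) (fun p => E2 n p) (fun p => S2 (n + p + 1) (p + 1)) hS q
end
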